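/- arXiv:1108.0652 — 7 statements merged into one kernel-verified Lean document; each statement's English description precedes it below -/
import Mathlib

section
/- Let K be a field of characteristic zero, C a K-linear category, and A an object of C such that the K-algebra End_C(A) is finite dimensional over K. Let e, e' : A → A be idempotent endomorphisms. Then the objects (A, e) and (A, e') of the Karoubi envelope Karoubi(C) are isomorphic if and only if e and e' are conjugate in End_C(A), i.e. there exists an invertible φ ∈ End_C(A) with e' = φ ∘ e ∘ φ⁻¹. -/
/-!
An isomorphism `(A, e) ≅ (A, e')` in the Karoubi envelope is the same as a pair `a, b` in
`R = End A` with `a * b = e` and `b * a = e'`. Right multiplication by `a` and by `b` are then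
inverse isomorphisms between the left ideals `R e` and `R e'`. As `R` is finite dimensional,
the left `R`-module `R` has finite length, so cancelling `R e ≅ R e'` from
`R e ⊕ R (1 - e) = R = R e' ⊕ R (1 - e')` (Krull–Schmidt) gives `R (1 - e) ≅ R (1 - e')`.
The two isomorphisms glue to an automorphism of the module `R` carrying one decomposition to
the other, i.e. to a unit of `R` conjugating `e` to `e'`.

Cancellation goes by induction on the length of the summand being cancelled. For an
indecomposable summand, Fitting's lemma makes every endomorphism a unit or nilpotent; this lets
one shear the isomorphism until its diagonal block on that summand is invertible, and then the
Schur complement is the required isomorphism of the other blocks.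
-/

universe u

namespace Module

variable {S : Type*} [Ring S]

variable (S) in
def IsIndecomposable (M : Type*) [AddCommGroup M] [Module S M] : Prop :=
  ∀ N N' : Submodule S M, IsCompl N N' → N = ⊥ ∨ N = ⊤

section Fitting

variable {M : Type*} [AddCommGroup M] [Module S M]

theorem IsIndecomposable.isUnit_or_isNilpotent [IsArtinian S M] [IsNoetherian S M]
    (hM : IsIndecomposable S M) (f : Module.End S M) : IsUnit f ∨ IsNilpotent f := by
  obtain ⟨n, hcompl, hn⟩ :=
    (f.eventually_isCompl_ker_pow_range_pow.and (Filter.eventually_ge_atTop 1)).exists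
  rcases hM _ _ hcompl with hker | hker
  · left
    rw [← isUnit_pow_iff (by omega : n ≠ 0), Module.End.isUnit_iff]
    exact IsArtinian.bijective_of_injective_endomorphism _ (LinearMap.ker_eq_bot.mp hker)
  · exact Or.inr ⟨n, LinearMap.ker_eq_top.mp hker⟩

theorem End.isUnit_of_mul_isUnit_left [IsNoetherian S M] {f g : Module.End S M}
    (h : IsUnit (f * g)) : IsUnit f := by
  rw [Module.End.isUnit_iff] at h ⊢
  have hf : Function.Surjective f := fun x => by
    obtain ⟨y, rfl⟩ := h.2 x
    exact ⟨g y, rfl⟩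
  exact ⟨IsNoetherian.injective_of_surjective_endomorphism f hf, hf⟩

end Fitting

section Cancellation

variable {M P Q : Type u} [AddCommGroup M] [AddCommGroup P] [AddCommGroup Q]
  [Module S M] [Module S P] [Module S Q]

theorem nonempty_linearEquiv_of_isUnit_fst_comp_inl (α : (M × P) ≃ₗ[S] (M × Q))
    (ha : IsUnit (LinearMap.fst S M Q ∘ₗ α.toLinearMap ∘ₗ LinearMap.inl S M P)) :
    Nonempty (P ≃ₗ[S] Q) := by
  obtain ⟨u, hu⟩ := ha
  let A := LinearMap.GeneralLinearGroup.generalLinearEquiv S M u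
  have corner : ∀ x, (α (x, 0)).1 = A x := fun x => by
    rw [LinearMap.GeneralLinearGroup.coeFn_generalLinearEquiv, hu]
    rfl
  -- `m p` kills the `M`-component of `α (m p, p)`, so `s` is the Schur complement of `A`.
  let m : P →ₗ[S] M :=
    -(A.symm.toLinearMap ∘ₗ LinearMap.fst S M Q ∘ₗ α.toLinearMap ∘ₗ LinearMap.inr S M P)
  let s : P →ₗ[S] Q := LinearMap.snd S M Q ∘ₗ α.toLinearMap ∘ₗ m.prod LinearMap.id
  have hs : ∀ p, α (m p, p) = (0, s p) := by
    intro p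
    refine Prod.ext ?_ rfl
    have : ((m p, p) : M × P) = (m p, 0) + (0, p) := by simp
    rw [this, map_add, Prod.fst_add, corner]
    simp [m]
  refine ⟨LinearEquiv.ofBijective s ⟨fun p p' h => ?_, fun q => ?_⟩⟩
  · exact congrArg Prod.snd (α.injective ((hs p).trans ((congrArg _ h).trans (hs p').symm)))
  · set x := α.symm (0, q) with hx
    have hx1 : x.1 = m x.2 := by
      have : A (x.1 - m x.2) = 0 := by
        have hsub : ((x.1 - m x.2, 0) : M × P) = x - (m x.2, x.2) := by ext <;> simp
        rw [← corner, hsub, map_sub, hs, hx, α.apply_symm_apply]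
        simp
      simpa [sub_eq_zero] using this
    refine ⟨x.2, ?_⟩
    have hαx : α x = (0, q) := α.apply_symm_apply _
    rw [show x = (m x.2, x.2) from Prod.ext hx1 rfl, hs] at hαx
    exact congrArg Prod.snd hαx

theorem IsIndecomposable.nonempty_linearEquiv_of_prod [IsArtinian S M] [IsNoetherian S M]
    (hM : IsIndecomposable S M) (α : (M × P) ≃ₗ[S] (M × Q)) : Nonempty (P ≃ₗ[S] Q) := by
  set a := LinearMap.fst S M Q ∘ₗ α.toLinearMap ∘ₗ LinearMap.inl S M P
  by_cases hunit : IsUnit a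
  · exact nonempty_linearEquiv_of_isUnit_fst_comp_inl α hunit
  have hnil : IsNilpotent a := (hM.isUnit_or_isNilpotent a).resolve_left hunit
  let a' := LinearMap.fst S M P ∘ₗ α.symm.toLinearMap ∘ₗ LinearMap.inl S M Q
  let b := LinearMap.fst S M Q ∘ₗ α.toLinearMap ∘ₗ LinearMap.inr S M P
  let c' := LinearMap.snd S M P ∘ₗ α.symm.toLinearMap ∘ₗ LinearMap.inl S M Q
  have hsum : a * a' + b ∘ₗ c' = 1 := by
    refine LinearMap.ext fun x => ?_
    have hx : α.symm (x, 0) = (a' x, 0) + (0, c' x) := by simp [a', c']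
    have := congrArg Prod.fst (α.apply_symm_apply (x, 0))
    rw [hx, map_add] at this
    exact this
  obtain ⟨w, hw⟩ : IsUnit (b ∘ₗ c' : Module.End S M) := by
    rw [eq_sub_of_add_eq' hsum]
    refine ((hM.isUnit_or_isNilpotent _).resolve_left fun h => hunit ?_).isUnit_one_sub
    exact End.isUnit_of_mul_isUnit_left h
  -- Shearing `M × P` by `c' w⁻¹` turns the corner `a` into the unit `a + 1`.
  let β := (LinearEquiv.skewProd (.refl S M) (.refl S P) (c' ∘ₗ (↑w⁻¹ : Module.End S M))).trans α
  refine nonempty_linearEquiv_of_isUnit_fst_comp_inl β ?_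
  suffices hβ : LinearMap.fst S M Q ∘ₗ β.toLinearMap ∘ₗ LinearMap.inl S M P = a + 1 by
    rw [hβ]
    exact hnil.isUnit_add_one
  refine LinearMap.ext fun x => ?_
  set y := c' ((↑w⁻¹ : Module.End S M) x)
  have hy : b y = x := by
    rw [← LinearMap.comp_apply, ← hw, ← Module.End.mul_apply, Units.mul_inv]
    rfl
  have hsplit : ((x, y) : M × P) = (x, 0) + (0, y) := by simp
  change (α (x, 0 + y)).1 = a x + x
  rw [zero_add, hsplit, map_add, Prod.fst_add, ← hy]
  rfl

theorem nonempty_linearEquiv_of_prod [IsArtinian S M] [IsNoetherian S M]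
    (α : (M × P) ≃ₗ[S] (M × Q)) : Nonempty (P ≃ₗ[S] Q) := by
  generalize hn : Module.length S M = n
  induction n using WellFoundedLT.induction generalizing M P Q with
  | ind n ih =>
  by_cases hM : IsIndecomposable S M
  · exact hM.nonempty_linearEquiv_of_prod α
  simp only [IsIndecomposable, not_forall, not_or] at hM
  obtain ⟨N, N', hNN', hNbot, hNtop⟩ := hM
  have hN'top : N' ≠ ⊤ := fun h => hNbot (eq_bot_of_isCompl_top (h ▸ hNN'))
  let ι : (N × N') ≃ₗ[S] M := N.prodEquivOfIsCompl N' hNN'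
  let α' : (N × (N' × P)) ≃ₗ[S] (N × (N' × Q)) :=
    (LinearEquiv.prodAssoc S N N' P).symm ≪≫ₗ ι.prodCongr (.refl S P) ≪≫ₗ α ≪≫ₗ
      (ι.prodCongr (.refl S Q)).symm ≪≫ₗ LinearEquiv.prodAssoc S N N' Q
  obtain ⟨α''⟩ := ih _ (hn ▸ Submodule.length_lt hNtop) α' rfl
  exact ih _ (hn ▸ Submodule.length_lt hN'top) α'' rfl

end Cancellation

namespace End

variable {E : Type*} [AddCommGroup E] [Module S E] [IsArtinian S E] [IsNoetherian S E]
  {p q : Module.End S E}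

theorem isConj_of_linearEquiv_range (hp : IsIdempotentElem p) (hq : IsIdempotentElem q)
    (σ : LinearMap.range p ≃ₗ[S] LinearMap.range q) : IsConj p q := by
  let ιp := Submodule.prodEquivOfIsCompl _ _ (LinearMap.IsIdempotentElem.isCompl hp)
  let ιq := Submodule.prodEquivOfIsCompl _ _ (LinearMap.IsIdempotentElem.isCompl hq)
  obtain ⟨τ⟩ := nonempty_linearEquiv_of_prod
    (ιp ≪≫ₗ ιq.symm ≪≫ₗ σ.symm.prodCongr (.refl S (LinearMap.ker q)))
  let φ : E ≃ₗ[S] E := ιp.symm ≪≫ₗ σ.prodCongr τ ≪≫ₗ ιq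
  obtain ⟨u, hu⟩ := (Module.End.isUnit_iff φ.toLinearMap).2 φ.bijective
  refine ⟨u, ?_⟩
  rw [SemiconjBy, hu]
  refine LinearMap.ext fun x => ?_
  obtain ⟨⟨y, z⟩, rfl⟩ := ιp.surjective x
  have hy : p y = y := (LinearMap.IsIdempotentElem.mem_range_iff hp).1 y.2
  have hz : p z = 0 := z.2
  have hσ : q (σ y) = σ y := (LinearMap.IsIdempotentElem.mem_range_iff hq).1 (σ y).2
  have hτ : q (τ z) = 0 := (τ z).2
  simp [φ, ιp, ιq, hy, hz, hσ, hτ]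

theorem isConj_of_mul_eq {a b : Module.End S E} (hp : IsIdempotentElem p)
    (hq : IsIdempotentElem q) (hab : a * b = p) (hba : b * a = q) : IsConj p q := by
  have hb : ∀ x ∈ LinearMap.range p, b x ∈ LinearMap.range q := by
    rintro _ ⟨x, rfl⟩
    exact ⟨b x, by rw [← hba, ← hab]; rfl⟩
  have ha : ∀ x ∈ LinearMap.range q, a x ∈ LinearMap.range p := by
    rintro _ ⟨x, rfl⟩
    exact ⟨a x, by rw [← hba, ← hab]; rfl⟩
  refine isConj_of_linearEquiv_range hp hq
    (LinearEquiv.ofLinearMap (b.restrict hb) (a.restrict ha) ?_ ?_) <;>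
    refine LinearMap.ext fun ⟨x, hx⟩ => Subtype.ext ?_
  · change (b * a) x = x
    rw [hba, ← LinearMap.IsIdempotentElem.mem_range_iff hq]
    exact hx
  · change (a * b) x = x
    rw [hab, ← LinearMap.IsIdempotentElem.mem_range_iff hp]
    exact hx

end End

end Module

open MulOpposite in
theorem MulOpposite.isConj_op {M : Type*} [Monoid M] {a b : M} :
    IsConj (op a) (op b) ↔ IsConj a b := by
  constructor
  · rintro ⟨c, hc⟩
    exact IsConj.symm ⟨(Units.opEquiv c).unop, hc.unop⟩
  · rintro ⟨c, hc⟩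
    exact IsConj.symm ⟨Units.opEquiv.symm (op c), hc.op⟩

theorem IsConj.exists_mul_eq_and_mul_eq {M : Type*} [Monoid M] {e f : M} (h : IsConj e f) :
    ∃ a b : M, a * b = e ∧ b * a = f := by
  obtain ⟨c, hc⟩ := h
  refine ⟨e * ↑c⁻¹, c, by simp [mul_assoc], ?_⟩
  rw [← mul_assoc, hc.eq, mul_assoc, Units.mul_inv, mul_one]

section IsArtinianRing

variable {R : Type*} [Ring R] [IsArtinianRing R] {e f : R}

open MulOpposite in
theorem IsIdempotentElem.isConj_of_mul_eq {a b : R} (he : IsIdempotentElem e)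
    (hf : IsIdempotentElem f) (hab : a * b = e) (hba : b * a = f) : IsConj e f := by
  -- In `End_R R ≅ Rᵐᵒᵖ` the roles of `a` and `b` are swapped.
  let ψ := RingEquiv.moduleEndSelf R
  rw [← MulOpposite.isConj_op]
  have := Module.End.isConj_of_mul_eq
    ((show IsIdempotentElem (op e) from congrArg op he).map ψ)
    ((show IsIdempotentElem (op f) from congrArg op hf).map ψ)
    (a := ψ (op b)) (b := ψ (op a)) (by rw [← map_mul, ← op_mul, hab])
    (by rw [← map_mul, ← op_mul, hba])
  simpa using MonoidHom.map_isConj ψ.symm.toMonoidHom this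

theorem IsIdempotentElem.isConj_iff_exists_mul_eq (he : IsIdempotentElem e)
    (hf : IsIdempotentElem f) : IsConj e f ↔ ∃ a b : R, a * b = e ∧ b * a = f :=
  ⟨IsConj.exists_mul_eq_and_mul_eq, fun ⟨_, _, hab, hba⟩ => he.isConj_of_mul_eq hf hab hba⟩

end IsArtinianRing

namespace CategoryTheory

variable {C : Type*} [Category C]

theorem End.isConj_iff {X : C} {e e' : End X} :
    IsConj e e' ↔ ∃ φ : X ≅ X, e' = φ.inv ≫ e ≫ φ.hom := by
  constructor
  · rintro ⟨c, hc⟩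
    exact ⟨Aut.unitsEndEquivAut X c, (Iso.eq_inv_comp _).2 hc.eq.symm⟩
  · rintro ⟨φ, hφ⟩
    exact ⟨(Aut.unitsEndEquivAut X).symm φ, ((Iso.eq_inv_comp _).1 hφ).symm⟩

theorem Idempotents.Karoubi.nonempty_iso_iff {P Q : Karoubi C} :
    Nonempty (P ≅ Q) ↔ ∃ (a : P.X ⟶ Q.X) (b : Q.X ⟶ P.X), a ≫ b = P.p ∧ b ≫ a = Q.p := by
  constructor
  · rintro ⟨φ⟩
    exact ⟨φ.hom.f, φ.inv.f, by rw [← comp_f, φ.hom_inv_id, id_f],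
      by rw [← comp_f, φ.inv_hom_id, id_f]⟩
  · rintro ⟨a, b, hab, hba⟩
    refine ⟨⟨⟨P.p ≫ a ≫ Q.p, ?_⟩, ⟨Q.p ≫ b ≫ P.p, ?_⟩, ?_, ?_⟩⟩
    · simp
    · simp
    · ext
      simp [← hba, reassoc_of% hab]
    · ext
      simp [← hab, reassoc_of% hba]

end CategoryTheory

open CategoryTheory Limits CategoryTheory.Idempotents

theorem karoubi_mk_iso_iff_conjugate_general
    (K : Type*) [Field K]
    {C : Type*} [Category C] [Preadditive C] [Linear K C]
    (A : C) [FiniteDimensional K (A ⟶ A)]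
    (e e' : A ⟶ A) (he : e ≫ e = e) (he' : e' ≫ e' = e') :
    Nonempty (Karoubi.mk A e he ≅ Karoubi.mk A e' he') ↔
      ∃ φ : A ≅ A, e' = φ.inv ≫ e ≫ φ.hom := by
  have : FiniteDimensional K (End A) := ‹FiniteDimensional K (A ⟶ A)›
  have : IsArtinianRing (End A) := .of_finite K (End A)
  rw [← End.isConj_iff, IsIdempotentElem.isConj_iff_exists_mul_eq (R := End A) he he',
    Karoubi.nonempty_iso_iff, exists_comm]
  -- `a * b` in `End A` is `b ≫ a`
  rfl

/-- let `C` be a `K`-linear category (`K` a field of characteristic zero) and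
`A` an object whose endomorphism algebra is finite dimensional over `K`.  Two idempotents
`e, e' : A ⟶ A` have isomorphic images `(A, e)`, `(A, e')` in the Karoubi envelope if and
only if they are conjugate in `End A`, i.e. `e' = φ ∘ e ∘ φ⁻¹` for some invertible
`φ : A ⟶ A`. -/
theorem karoubi_mk_iso_iff_conjugate
    (K : Type*) [Field K] [CharZero K]
    {C : Type*} [Category C] [Preadditive C] [Linear K C]
    (A : C) [FiniteDimensional K (A ⟶ A)]
    (e e' : A ⟶ A) (he : e ≫ e = e) (he' : e' ≫ e' = e') :
    Nonempty (Karoubi.mk A e he ≅ Karoubi.mk A e' he') ↔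
      ∃ φ : A ≅ A, e' = φ.inv ≫ e ≫ φ.hom :=
  karoubi_mk_iso_iff_conjugate_general K A e e' he he'
end

section
/- Let C be a preadditive category in which every idempotent splits, and let X be an object of C. Write R = End(X) and let J = J(R) be the Jacobson radical of R. Suppose R is semiperfect, i.e. the quotient ring R/J is semisimple and every idempotent of R/J is the image of an idempotent of R under the quotient map. If X is indecomposable, then R is a local ring. -/
/-!
An idempotent endomorphism `p` of `X` splits, together with `𝟙 - p`, into a biproduct
decomposition of `X`; so when `X` is indecomposable the only idempotents of `R = End X` are
`0` and `1`. Since idempotents lift along `R → R/J`, the semisimple ring `R/J` has no nontrivial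
idempotents either, hence every left ideal of `R/J`, being generated by an idempotent, is `0`
or everything: `R/J` is a division ring. Finally, as `J` is the Jacobson radical, an element
of `R` is a unit as soon as its image in `R/J` is, and `R` is local because `R/J` is.
-/

open CategoryTheory Limits

/-- An object of a preadditive category is indecomposable if it is not a zero object and,
whenever it is isomorphic to the biproduct of two objects `Y` and `Z`, one of `Y`, `Z`
is a zero object. -/
def IsIndecomposable {C : Type*} [Category C] [Preadditive C] (X : C) : Prop :=
  ¬ IsZero X ∧ ∀ (Y Z : C) (b : BinaryBicone Y Z), b.IsBilimit → (X ≅ b.pt) →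
    IsZero Y ∨ IsZero Z

section Idempotents

variable {C : Type*} [Category C] [Preadditive C]

theorem exists_isBilimit_binaryBicone_of_idem [IsIdempotentComplete C] {X : C} (p : X ⟶ X)
    (hp : p ≫ p = p) :
    ∃ (Y Z : C) (b : BinaryBicone Y Z), Nonempty b.IsBilimit ∧
      ∃ φ : X ≅ b.pt, φ.hom ≫ b.fst ≫ b.inl ≫ φ.inv = p := by
  have hpq : p ≫ (𝟙 X - p) = 0 := by simp [hp]
  have hqp : (𝟙 X - p) ≫ p = 0 := by simp [hp]
  have hq : (𝟙 X - p) ≫ (𝟙 X - p) = 𝟙 X - p := by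
    rw [Preadditive.comp_sub, hqp, Category.comp_id, sub_zero]
  obtain ⟨Y, i₁, r₁, hir₁, hri₁⟩ := IsIdempotentComplete.idempotents_split X p hp
  obtain ⟨Z, i₂, r₂, hir₂, hri₂⟩ := IsIdempotentComplete.idempotents_split X _ hq
  have hi₁r₂ : i₁ ≫ r₂ = 0 := by
    calc i₁ ≫ r₂ = (i₁ ≫ r₁) ≫ i₁ ≫ r₂ ≫ (i₂ ≫ r₂) := by
          simp only [hir₁, hir₂, Category.id_comp, Category.comp_id]
      _ = i₁ ≫ (r₁ ≫ i₁) ≫ (r₂ ≫ i₂) ≫ r₂ := by simp only [Category.assoc]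
      _ = 0 := by rw [hri₁, hri₂, reassoc_of% hpq, zero_comp, comp_zero]
  have hi₂r₁ : i₂ ≫ r₁ = 0 := by
    calc i₂ ≫ r₁ = (i₂ ≫ r₂) ≫ i₂ ≫ r₁ ≫ (i₁ ≫ r₁) := by
          simp only [hir₁, hir₂, Category.id_comp, Category.comp_id]
      _ = i₂ ≫ (r₂ ≫ i₂) ≫ (r₁ ≫ i₁) ≫ r₁ := by simp only [Category.assoc]
      _ = 0 := by rw [hri₁, hri₂, reassoc_of% hqp, zero_comp, comp_zero]
  let b : BinaryBicone Y Z :=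
    { pt := X, fst := r₁, snd := r₂, inl := i₁, inr := i₂
      inl_fst := hir₁, inl_snd := hi₁r₂, inr_fst := hi₂r₁, inr_snd := hir₂ }
  have htotal : b.fst ≫ b.inl + b.snd ≫ b.inr = 𝟙 b.pt := by
    change r₁ ≫ i₁ + r₂ ≫ i₂ = 𝟙 X
    rw [hri₁, hri₂, add_sub_cancel]
  exact ⟨Y, Z, b, ⟨isBinaryBilimitOfTotal b htotal⟩, Iso.refl X, by simp [b, hri₁]⟩

theorem IsIndecomposable.eq_zero_or_eq_id_of_idem [IsIdempotentComplete C] {X : C}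
    (hX : IsIndecomposable X) {p : X ⟶ X} (hp : p ≫ p = p) : p = 0 ∨ p = 𝟙 X := by
  obtain ⟨Y, Z, b, ⟨hb⟩, φ, rfl⟩ := exists_isBilimit_binaryBicone_of_idem p hp
  rcases hX.2 Y Z b hb φ with hY | hZ
  · left
    simp [hY.eq_of_src b.inl 0]
  · right
    have hfst : b.fst ≫ b.inl = 𝟙 b.pt := by
      simpa [hZ.eq_of_src b.inr 0] using IsBilimit.binary_total hb
    simp [reassoc_of% hfst]

theorem IsIndecomposable.nontrivial_end {X : C} (hX : IsIndecomposable X) : Nontrivial (End X) :=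
  ⟨1, 0, fun h => hX.1 ((IsZero.iff_id_eq_zero X).mpr h)⟩

end Idempotents

theorem IsSemisimpleRing.isLocalRing_of_isIdempotentElem {R : Type*} [Ring R]
    [IsSemisimpleRing R] [Nontrivial R] (h : ∀ e : R, IsIdempotentElem e → e = 0 ∨ e = 1) :
    IsLocalRing R := by
  have : IsSimpleModule R R := by
    refine (isSimpleModule_iff R R).mpr ⟨fun I => ?_⟩
    obtain ⟨e, he, rfl⟩ := IsSemisimpleRing.ideal_eq_span_idempotent I
    rcases h e he with rfl | rfl
    · exact Or.inl (Ideal.span_singleton_eq_bot.mpr rfl)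
    · exact Or.inr Ideal.span_singleton_one
  have hunit := (isSimpleModule_self_iff_isUnit.mp this).2
  refine .of_isUnit_or_isUnit_one_sub_self fun a => ?_
  by_cases ha : a = 0
  · exact Or.inr (by simp [ha])
  · exact Or.inl (hunit a ha)

namespace TwoSidedIdeal

variable {R : Type*} [Ring R] (J : TwoSidedIdeal R)

theorem mk'_eq_zero_iff {x : R} : RingCon.mk' J.ringCon x = 0 ↔ x ∈ J := by
  change (x : J.ringCon.Quotient) = ((0 : R) : J.ringCon.Quotient) ↔ x ∈ J
  rw [RingCon.eq, rel_iff, sub_zero]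

variable {J}

theorem nontrivial_quotient_of_le_jacobson [Nontrivial R]
    (hJ : asIdeal J ≤ Ideal.jacobson ⊥) : Nontrivial J.ringCon.Quotient := by
  refine ⟨⟨RingCon.mk' J.ringCon 1, 0, fun h => ?_⟩⟩
  have h1 : (1 : R) ∈ Ideal.jacobson ⊥ := hJ (mem_asIdeal.mpr ((J.mk'_eq_zero_iff).mp h))
  exact bot_ne_top (Ideal.jacobson_eq_top_iff.mp (Ideal.eq_top_of_isUnit_mem _ h1 isUnit_one))

theorem exists_mul_eq_one_of_isUnit_mk' (hJ : asIdeal J ≤ Ideal.jacobson ⊥) {a : R}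
    (ha : IsUnit (RingCon.mk' J.ringCon a)) : ∃ u, u * a = 1 := by
  obtain ⟨w, hw⟩ := ha.exists_left_inv
  obtain ⟨y, rfl⟩ := J.ringCon.mk'_surjective w
  have hya : y * a - 1 ∈ Ideal.jacobson ⊥ :=
    hJ <| mem_asIdeal.mpr <| (J.mk'_eq_zero_iff).mp <| by
      rw [map_sub, map_mul, hw, map_one, sub_self]
  obtain ⟨s, hs⟩ := Ideal.exists_mul_sub_mem_of_sub_one_mem_jacobson (y * a) hya
  rw [Ideal.mem_bot, sub_eq_zero] at hs
  exact ⟨s * y, by rw [mul_assoc, hs]⟩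

theorem isLocalHom_mk'_of_le_jacobson (hJ : asIdeal J ≤ Ideal.jacobson ⊥) :
    IsLocalHom (RingCon.mk' J.ringCon) := by
  refine ⟨fun a ha => ?_⟩
  obtain ⟨u, hu⟩ := exists_mul_eq_one_of_isUnit_mk' hJ ha
  have hfu : IsUnit (RingCon.mk' J.ringCon u) := by
    have h : RingCon.mk' J.ringCon u * ha.unit = 1 := by
      rw [IsUnit.unit_spec, ← map_mul, hu, map_one]
    exact Units.eq_inv_of_mul_eq_one_right h ▸ Units.isUnit _
  obtain ⟨v, hv⟩ := exists_mul_eq_one_of_isUnit_mk' hJ hfu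
  exact ⟨⟨a, u, left_inv_eq_right_inv hv hu ▸ hv, hu⟩, rfl⟩

end TwoSidedIdeal

/-- let `C` be a preadditive category in which every idempotent splits and
`X` an object of `C`.  Write `R = End X` and let `J` be the Jacobson radical of `R`
(the intersection of all maximal left ideals, which is a two-sided ideal).  If `R` is
semiperfect — i.e. `R/J` is a semisimple ring and every idempotent of `R/J` lifts to an
idempotent of `R` — and `X` is indecomposable, then `R` is a local ring. -/
theorem local_end_of_indecomposable_of_semiperfect
    {C : Type*} [Category C] [Preadditive C] [IsIdempotentComplete C] (X : C)
    (J : TwoSidedIdeal (End X))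
    (hJ : TwoSidedIdeal.asIdeal J = Ideal.jacobson (⊥ : Ideal (End X)))
    (hss : IsSemisimpleRing J.ringCon.Quotient)
    (hlift : ∀ y : J.ringCon.Quotient, y * y = y →
      ∃ e : End X, e * e = e ∧ RingCon.mk' J.ringCon e = y)
    (hX : IsIndecomposable X) :
    IsLocalRing (End X) := by
  have := hX.nontrivial_end
  have := TwoSidedIdeal.nontrivial_quotient_of_le_jacobson hJ.le
  have := TwoSidedIdeal.isLocalHom_mk'_of_le_jacobson hJ.le
  have : IsLocalRing J.ringCon.Quotient := hss.isLocalRing_of_isIdempotentElem fun y hy => by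
    obtain ⟨e, he, rfl⟩ := hlift y hy
    rcases hX.eq_zero_or_eq_id_of_idem he with rfl | rfl
    · exact Or.inl (map_zero _)
    · exact Or.inr (map_one _)
  exact (RingCon.mk' J.ringCon).domain_isLocalRing
end

section
/- Let K be a field of characteristic zero, C a K-linear Krull–Schmidt category, D a preadditive category, and F : C → D a full additive functor. If X and Y are indecomposable objects of C such that F(X) and F(Y) are isomorphic in D and F(X) is not a zero object, then X and Y are isomorphic in C. -/
open CategoryTheory Limits

lemma aux_isUnit_or_isNilpotent {K A : Type*} [Field K] [Ring A] [Algebra K A]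
    [FiniteDimensional K A]
    (hidem : ∀ e : A, e * e = e → e = 0 ∨ e = 1) (u : A) :
    IsUnit u ∨ IsNilpotent u := by
  classical
  have hint : IsIntegral K u := .of_finite K u
  set P := minpoly K u with hPdef
  have hPne : P ≠ 0 := minpoly.ne_zero hint
  have hPu : Polynomial.aeval u P = 0 := minpoly.aeval K u
  set k := P.rootMultiplicity 0 with hk
  obtain ⟨Q, hPQ, hXQ⟩ := P.exists_eq_pow_rootMultiplicity_mul_and_not_dvd hPne 0
  rw [Polynomial.C_0, sub_zero] at hPQ hXQ
  rcases Nat.eq_zero_or_pos k with hk0 | hkpos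
  · -- `0` is not a root of `P`, hence `u` is a unit.
    left
    have hroot : ¬ P.IsRoot 0 := by
      intro h
      have := (Polynomial.rootMultiplicity_pos hPne).mpr h
      omega
    have hc : P.coeff 0 ≠ 0 := by
      rwa [Polynomial.coeff_zero_eq_eval_zero]
    set d := Polynomial.aeval u P.divX with hd
    have hud : u * d = algebraMap K A (-(P.coeff 0)) := by
      have h := congrArg (Polynomial.aeval u) (Polynomial.X_mul_divX_add P)
      rw [map_add, map_mul, Polynomial.aeval_X, Polynomial.aeval_C, hPu] at h
      rw [map_neg]
      exact eq_neg_of_add_eq_zero_left h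
    have hdu : d * u = u * d := by
      have h : Polynomial.aeval u (P.divX * Polynomial.X)
          = Polynomial.aeval u (Polynomial.X * P.divX) := by rw [mul_comm]
      simpa [map_mul] using h
    set w := (-(P.coeff 0))⁻¹ • d with hw
    have h1 : u * w = 1 := by
      rw [hw, mul_smul_comm, hud, Algebra.smul_def, ← map_mul,
        inv_mul_cancel₀ (neg_ne_zero.mpr hc), map_one]
    have h2 : w * u = 1 := by
      rw [hw, smul_mul_assoc, hdu, hud, Algebra.smul_def, ← map_mul,
        inv_mul_cancel₀ (neg_ne_zero.mpr hc), map_one]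
    exact ⟨⟨u, w, h1, h2⟩, rfl⟩
  · -- use the idempotent coming from coprimality of `X^k` and `Q`
    have hcop : IsCoprime ((Polynomial.X : Polynomial K) ^ k) Q :=
      (Polynomial.irreducible_X.coprime_iff_not_dvd.mpr hXQ).pow_left
    obtain ⟨a, b, hab⟩ := hcop
    set e := Polynomial.aeval u (b * Q) with he
    have hee : e * e = e := by
      have hpoly : (b * Q) * (b * Q) = b * Q - a * b * P := by
        linear_combination (b * Q) * hab + a * b * hPQ
      rw [he, ← map_mul, hpoly, map_sub, map_mul (Polynomial.aeval u) (a * b) P, hPu,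
        mul_zero, sub_zero]
    rcases hidem e hee with he0 | he1
    · -- aeval (a * X^k) = 1, so u is a unit
      left
      have h1 : Polynomial.aeval u (a * Polynomial.X ^ k) = 1 := by
        have h := congrArg (Polynomial.aeval u) hab
        rw [map_add, map_one, ← he, he0, add_zero] at h
        exact h
      set v := Polynomial.aeval u (a * Polynomial.X ^ (k - 1)) with hv
      have hk1 : k - 1 + 1 = k := by omega
      have hpow : (Polynomial.X : Polynomial K) ^ k = Polynomial.X ^ (k - 1) * Polynomial.X := by
        rw [← pow_succ, hk1]
      have hXaX : (Polynomial.X : Polynomial K) * (a * Polynomial.X ^ (k - 1))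
          = a * Polynomial.X ^ k := by rw [hpow]; ring
      have haXX : (a * Polynomial.X ^ (k - 1)) * (Polynomial.X : Polynomial K)
          = a * Polynomial.X ^ k := by rw [hpow]; ring
      have huv : u * v = 1 := by
        calc u * v = Polynomial.aeval u (Polynomial.X * (a * Polynomial.X ^ (k - 1))) := by
              rw [map_mul, Polynomial.aeval_X, hv]
          _ = 1 := by rw [hXaX, h1]
      have hvu : v * u = 1 := by
        calc v * u = Polynomial.aeval u ((a * Polynomial.X ^ (k - 1)) * Polynomial.X) := by
              rw [map_mul, Polynomial.aeval_X, hv]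
          _ = 1 := by rw [haXX, h1]
      exact ⟨⟨u, v, huv, hvu⟩, rfl⟩
    · -- b(u) * Q(u) = 1 and u^k * Q(u) = 0, so u^k = 0
      right
      refine ⟨k, ?_⟩
      have hQb : Polynomial.aeval u Q * Polynomial.aeval u b = 1 := by
        rw [← map_mul, mul_comm, ← he, he1]
      have h0 : u ^ k * Polynomial.aeval u Q = 0 := by
        have := congrArg (Polynomial.aeval u) hPQ
        rw [hPu, map_mul, map_pow, Polynomial.aeval_X] at this
        exact this.symm
      calc u ^ k = u ^ k * (Polynomial.aeval u Q * Polynomial.aeval u b) := by rw [hQb, mul_one]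
        _ = (u ^ k * Polynomial.aeval u Q) * Polynomial.aeval u b := by rw [mul_assoc]
        _ = 0 := by rw [h0, zero_mul]


/-- In an idempotent complete preadditive category, an idempotent endomorphism of an
indecomposable object is `0` or the identity. -/
lemma aux_idem_eq_zero_or_id {C : Type*} [Category C] [Preadditive C]
    [IsIdempotentComplete C] {X : C} (hX : IsIndecomposable X)
    (e : X ⟶ X) (he : e ≫ e = e) : e = 0 ∨ e = 𝟙 X := by
  obtain ⟨A, iA, rA, hA1, hA2⟩ := IsIdempotentComplete.idempotents_split X e he
  have he' : (𝟙 X - e) ≫ (𝟙 X - e) = 𝟙 X - e := by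
    simp [Preadditive.sub_comp, Preadditive.comp_sub, he]
  obtain ⟨B, iB, rB, hB1, hB2⟩ := IsIdempotentComplete.idempotents_split X (𝟙 X - e) he'
  have hiAe : iA ≫ e = iA := by rw [← hA2, ← Category.assoc, hA1, Category.id_comp]
  have hiBe : iB ≫ e = 0 := by
    have h : iB ≫ (𝟙 X - e) = iB := by rw [← hB2, ← Category.assoc, hB1, Category.id_comp]
    rw [Preadditive.comp_sub, Category.comp_id] at h
    exact sub_eq_self.mp (by rw [h])
  have inl_snd : iA ≫ rB = 0 := by
    have : (iA ≫ rB) ≫ iB ≫ rB = iA ≫ rB := by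
      rw [Category.assoc, hB1, Category.comp_id]
    rw [← this, Category.assoc, ← Category.assoc rB iB rB, ← Category.assoc]
    rw [show iA ≫ rB ≫ iB = 0 from by
      rw [hB2, Preadditive.comp_sub, Category.comp_id, hiAe, sub_self]]
    simp
  have inr_fst : iB ≫ rA = 0 := by
    have : (iB ≫ rA) ≫ iA ≫ rA = iB ≫ rA := by
      rw [Category.assoc, hA1, Category.comp_id]
    rw [← this, Category.assoc, ← Category.assoc rA iA rA, ← Category.assoc]
    rw [show iB ≫ rA ≫ iA = 0 from by rw [hA2, hiBe]]
    simp
  let b : BinaryBicone A B :=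
    { pt := X, fst := rA, snd := rB, inl := iA, inr := iB,
      inl_fst := hA1, inl_snd := inl_snd, inr_fst := inr_fst, inr_snd := hB1 }
  have total : b.fst ≫ b.inl + b.snd ≫ b.inr = 𝟙 b.pt := by
    show rA ≫ iA + rB ≫ iB = 𝟙 X
    rw [hA2, hB2]; abel
  rcases hX.2 A B b (isBinaryBilimitOfTotal b total) (Iso.refl X) with hA | hB
  · left
    rw [← hA2, hA.eq_of_src iA 0, Limits.comp_zero]
  · right
    have h : 𝟙 X - e = 0 := by rw [← hB2, hB.eq_of_src iB 0, Limits.comp_zero]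
    exact (sub_eq_zero.mp h).symm

/-- let `C` be a `K`-linear Krull–Schmidt category (`K` a field of
characteristic zero), `D` a preadditive category and `F : C ⥤ D` a full additive functor.
If `X` and `Y` are indecomposable objects of `C` with `F(X) ≅ F(Y)` and `F(X)` nonzero,
then `X ≅ Y`. -/
theorem iso_of_image_iso_of_indecomposable
    (K : Type*) [Field K] [CharZero K]
    {C : Type*} [Category C] [Preadditive C] [Linear K C]
    [HasZeroObject C] [HasFiniteBiproducts C] [IsIdempotentComplete C]
    (hfin : ∀ X Y : C, FiniteDimensional K (X ⟶ Y))
    {D : Type*} [Category D] [Preadditive D]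
    (F : C ⥤ D) [F.Additive] [F.Full]
    (X Y : C) (hX : IsIndecomposable X) (hY : IsIndecomposable Y)
    (hiso : Nonempty (F.obj X ≅ F.obj Y)) (hnz : ¬ IsZero (F.obj X)) :
    Nonempty (X ≅ Y) := by
  obtain ⟨φ⟩ := hiso
  obtain ⟨f, hf⟩ := F.map_surjective φ.hom
  obtain ⟨g, hg⟩ := F.map_surjective φ.inv
  -- key step: any endomorphism of an indecomposable object mapping to the identity
  -- under `F` is invertible
  have key : ∀ (Z : C), IsIndecomposable Z → ¬ IsZero (F.obj Z) →
      ∀ w : Z ⟶ Z, F.map w = 𝟙 (F.obj Z) →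
      ∃ w' : Z ⟶ Z, w ≫ w' = 𝟙 Z ∧ w' ≫ w = 𝟙 Z := by
    intro Z hZ hZnz w hw
    haveI : FiniteDimensional K (End Z) := hfin Z Z
    have hidem : ∀ e : End Z, e * e = e → e = 0 ∨ e = 1 := fun e he =>
      aux_idem_eq_zero_or_id hZ e he
    let wE : End Z := w
    rcases aux_isUnit_or_isNilpotent (K := K) hidem wE with hu | ⟨n, hn⟩
    · obtain ⟨⟨val, inv, vi, iv⟩, hval⟩ := hu
      have hval' : val = w := hval
      refine ⟨inv, ?_, ?_⟩
      · have : inv * val = 1 := iv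
        rw [End.mul_def, hval'] at this
        exact this
      · have : val * inv = 1 := vi
        rw [End.mul_def, hval'] at this
        exact this
    · exfalso
      have hFn : ∀ m : ℕ, F.map (wE ^ m : End Z) = 𝟙 (F.obj Z) := by
        intro m
        induction m with
        | zero => simp
        | succ m ih =>
          have hh : (wE ^ (m + 1) : End Z) = (w ≫ (wE ^ m : End Z) : Z ⟶ Z) := by
            rw [pow_succ, End.mul_def]
          rw [hh, F.map_comp, hw, ih, Category.comp_id]
      have h := hFn n
      rw [hn] at h
      have h0 : F.map (0 : Z ⟶ Z) = 0 := F.map_zero Z Z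
      rw [h0] at h
      exact hZnz ((IsZero.iff_id_eq_zero _).mpr h.symm)
  have hFu : F.map (f ≫ g) = 𝟙 (F.obj X) := by rw [F.map_comp, hf, hg, Iso.hom_inv_id]
  have hFv : F.map (g ≫ f) = 𝟙 (F.obj Y) := by rw [F.map_comp, hg, hf, Iso.inv_hom_id]
  have hnzY : ¬ IsZero (F.obj Y) := fun h => hnz (h.of_iso φ)
  obtain ⟨p, hp1, hp2⟩ := key X hX hnz (f ≫ g) hFu
  obtain ⟨q, hq1, hq2⟩ := key Y hY hnzY (g ≫ f) hFv
  have h1 : f ≫ g ≫ p = 𝟙 X := by rw [← Category.assoc]; exact hp1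
  have h2 : (q ≫ g) ≫ f = 𝟙 Y := by rw [Category.assoc]; exact hq2
  have heq : g ≫ p = q ≫ g := by
    calc g ≫ p = (q ≫ g ≫ f) ≫ g ≫ p := by
            have h2' : q ≫ g ≫ f = 𝟙 Y := by rw [← Category.assoc]; exact h2
            rw [h2', Category.id_comp]
      _ = q ≫ g ≫ (f ≫ g ≫ p) := by simp only [Category.assoc]
      _ = q ≫ g := by rw [h1, Category.comp_id]
  exact ⟨⟨f, g ≫ p, h1, by rw [heq, Category.assoc]; exact hq2⟩⟩
end

section
/- Let δ ∈ ℤ, let λ and μ be bipartitions, and let i < j be integers such that i ∈ I_∨(λ, δ) \ I_∧(λ) and j ∈ I_∧(λ) \ I_∨(λ, δ). Suppose that I_∧(μ) = (I_∧(λ) \ {j}) ∪ {i} and I_∨(μ, δ) = (I_∨(λ, δ) \ {i}) ∪ {j} (i.e. μ is obtained from λ by swapping the labels of the ∨∧-pair (i, j)). Then |μ•| = |λ•| + i − j and |μ°| = |λ°| + i − j (equalities of integers). -/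
/-! Partitions are encoded as antitone, eventually-zero functions `f : ℕ → ℕ`, where
`f k` is the `(k+1)`-st part (so indices are shifted by one compared to the usual
one-based convention). -/

/-- `I_∧(λ) = { λ•ₖ − k + 1 : k ≥ 1 }` for the partition `λ•` encoded by `f`
(with `f k = λ•_{k+1}` this is `{ f k − k : k ∈ ℕ }`). -/
def wedgeSet (f : ℕ → ℕ) : Set ℤ :=
  {x | ∃ k : ℕ, x = (f k : ℤ) - k}

/-- `I_∨(λ, δ) = { k − δ − λ°ₖ : k ≥ 1 }` for the partition `λ°` encoded by `g`
(with `g k = λ°_{k+1}` this is `{ (k+1) − δ − g k : k ∈ ℕ }`). -/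
def veeSet (δ : ℤ) (g : ℕ → ℕ) : Set ℤ :=
  {x | ∃ k : ℕ, x = ((k : ℤ) + 1) - δ - g k}

/-- The size `|α| = Σₖ αₖ` of a partition, as an integer. -/
noncomputable def psize (f : ℕ → ℕ) : ℤ :=
  ∑ᶠ k, (f k : ℤ)

/-!
Cut off at a level `K` beyond which a partition `f` vanishes, the wedge set becomes the finite
set of the `K` distinct numbers `f k - k` (`k < K`), whose sum is `|f| - (0 + ⋯ + (K - 1))`.
Exchanging a member `b` for a non-member `a` therefore changes the size by `a - b`. The vee set
is the reflection `x ↦ 1 - δ - x` of the wedge set, so the white part is the same statement for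
the reflected pair `(1 - δ - j, 1 - δ - i)`.
-/

open Finset

lemma psize_eq_sum_range {f : ℕ → ℕ} {K : ℕ} (hK : ∀ k, K ≤ k → f k = 0) :
    psize f = ∑ k ∈ range K, (f k : ℤ) := by
  refine finsum_eq_finsetSum_of_support_subset _ fun k hk => ?_
  by_contra hkK
  exact hk (by simp [hK k (by simpa using hkK)])

def wedgeFinset (f : ℕ → ℕ) (K : ℕ) : Finset ℤ :=
  (range K).image fun k => (f k : ℤ) - k

lemma coe_wedgeFinset {f : ℕ → ℕ} {K : ℕ} (hK : ∀ k, K ≤ k → f k = 0) :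
    (wedgeFinset f K : Set ℤ) = wedgeSet f ∩ Set.Ici (1 - K) := by
  ext x
  simp only [wedgeFinset, coe_image, coe_range, Set.mem_image, Set.mem_Iio, wedgeSet,
    Set.mem_inter_iff, Set.mem_ofPred_eq, Set.mem_Ici]
  constructor
  · rintro ⟨k, hk, rfl⟩
    exact ⟨⟨k, rfl⟩, by omega⟩
  · rintro ⟨⟨k, rfl⟩, hx⟩
    refine ⟨k, ?_, rfl⟩
    by_contra hkK
    have := hK k (by omega)
    omega

lemma sum_wedgeFinset {f : ℕ → ℕ} (hf : Antitone f) {K : ℕ} (hK : ∀ k, K ≤ k → f k = 0) :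
    ∑ x ∈ wedgeFinset f K, x = psize f - ∑ k ∈ range K, (k : ℤ) := by
  have hanti : StrictAnti fun k => (f k : ℤ) - k := fun a b hab => by
    have : f b ≤ f a := hf hab.le
    dsimp only
    omega
  rw [wedgeFinset, sum_image hanti.injective.injOn, psize_eq_sum_range hK, sum_sub_distrib]

lemma Finset.sum_eq_add_sub_of_coe_eq_swap {α : Type*} [AddCommGroup α] [DecidableEq α]
    {A B : Finset α} {S U : Set α} {a b : α} (hA : (A : Set α) = S ∩ U)
    (hB : (B : Set α) = ((S \ {b}) ∪ {a}) ∩ U) (ha : a ∈ U \ S) (hb : b ∈ S ∩ U) :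
    ∑ x ∈ B, x = ∑ x ∈ A, x + a - b := by
  have hbA : b ∈ A := by simpa [← mem_coe, hA] using hb
  have haA : a ∉ A.erase b := fun h =>
    ha.2 ((Set.ext_iff.1 hA a).1 (mem_coe.2 (mem_of_mem_erase h))).1
  have hBA : B = insert a (A.erase b) := by
    ext x
    have hAx := Set.ext_iff.1 hA x
    have hBx := Set.ext_iff.1 hB x
    simp only [mem_coe] at hAx hBx
    rw [mem_insert, mem_erase, hBx, hAx]
    by_cases hxa : x = a
    · subst hxa
      simpa using ha.1
    · simp only [Set.union_singleton, Set.mem_inter_iff, Set.mem_insert_iff, hxa, Set.mem_sdiff,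
        Set.mem_singleton_iff, false_or, ne_eq]
      tauto
  rw [hBA, sum_insert haA, sum_erase_eq_sub hbA]
  abel

lemma psize_eq_of_wedgeSet_eq_swap {f g : ℕ → ℕ} (hf : Antitone f) (hg : Antitone g)
    (hf0 : ∃ N, ∀ k, N ≤ k → f k = 0) (hg0 : ∃ N, ∀ k, N ≤ k → g k = 0) {a b : ℤ}
    (ha : a ∉ wedgeSet f) (hb : b ∈ wedgeSet f)
    (h : wedgeSet g = (wedgeSet f \ {b}) ∪ {a}) :
    psize g = psize f + a - b := by
  obtain ⟨Nf, hNf⟩ := hf0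
  obtain ⟨Ng, hNg⟩ := hg0
  obtain ⟨K, hfK, hgK, haK, hbK⟩ : ∃ K : ℕ, Nf ≤ K ∧ Ng ≤ K ∧ 1 - a ≤ K ∧ 1 - b ≤ K :=
    ((Filter.eventually_ge_atTop Nf).and <| (Filter.eventually_ge_atTop Ng).and <|
      (tendsto_natCast_atTop_atTop.eventually_ge_atTop (1 - a)).and
        (tendsto_natCast_atTop_atTop.eventually_ge_atTop (1 - b))).exists
  have hfK' : ∀ k, K ≤ k → f k = 0 := fun k hk => hNf k (hfK.trans hk)
  have hgK' : ∀ k, K ≤ k → g k = 0 := fun k hk => hNg k (hgK.trans hk)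
  have hsum := Finset.sum_eq_add_sub_of_coe_eq_swap (coe_wedgeFinset hfK')
    (h ▸ coe_wedgeFinset hgK') ⟨show 1 - (K : ℤ) ≤ a by omega, ha⟩
    ⟨hb, show 1 - (K : ℤ) ≤ b by omega⟩
  rw [sum_wedgeFinset hf hfK', sum_wedgeFinset hg hgK'] at hsum
  linarith

lemma mem_veeSet_iff {δ x : ℤ} {g : ℕ → ℕ} : x ∈ veeSet δ g ↔ 1 - δ - x ∈ wedgeSet g := by
  simp only [veeSet, wedgeSet, Set.mem_ofPred_eq]
  exact exists_congr fun k => by omega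

lemma wedgeSet_eq_of_veeSet_eq {δ a b : ℤ} {f g : ℕ → ℕ}
    (h : veeSet δ g = (veeSet δ f \ {a}) ∪ {b}) :
    wedgeSet g = (wedgeSet f \ {1 - δ - a}) ∪ {1 - δ - b} := by
  ext x
  have hx := Set.ext_iff.1 h (1 - δ - x)
  simp only [mem_veeSet_iff, sub_sub_cancel, Set.mem_union, Set.mem_sdiff,
    Set.mem_singleton_iff] at hx
  have ha : 1 - δ - x = a ↔ x = 1 - δ - a := by omega
  have hb : 1 - δ - x = b ↔ x = 1 - δ - b := by omega
  simp only [hx, ha, hb, Set.mem_union, Set.mem_sdiff, Set.mem_singleton_iff]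

theorem size_of_swap_vee_wedge_pair_general
    (δ : ℤ) (lb lw mb mw : ℕ → ℕ)
    (hlb : Antitone lb) (hlw : Antitone lw) (hmb : Antitone mb) (hmw : Antitone mw)
    (hlb0 : ∃ N, ∀ k, N ≤ k → lb k = 0) (hlw0 : ∃ N, ∀ k, N ≤ k → lw k = 0)
    (hmb0 : ∃ N, ∀ k, N ≤ k → mb k = 0) (hmw0 : ∃ N, ∀ k, N ≤ k → mw k = 0)
    (i j : ℤ)
    (hi : i ∈ veeSet δ lw \ wedgeSet lb)
    (hj : j ∈ wedgeSet lb \ veeSet δ lw)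
    (hwedge : wedgeSet mb = (wedgeSet lb \ {j}) ∪ {i})
    (hvee : veeSet δ mw = (veeSet δ lw \ {i}) ∪ {j}) :
    psize mb = psize lb + i - j ∧ psize mw = psize lw + i - j := by
  refine ⟨psize_eq_of_wedgeSet_eq_swap hlb hmb hlb0 hmb0 hi.2 hj.1 hwedge, ?_⟩
  have hwhite := psize_eq_of_wedgeSet_eq_swap hlw hmw hlw0 hmw0
    (mt mem_veeSet_iff.2 hj.2) (mem_veeSet_iff.1 hi.1) (wedgeSet_eq_of_veeSet_eq hvee)
  linarith

/-- if the bipartition `μ = (μ•, μ°)` is obtained from `λ = (λ•, λ°)` by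
swapping the labels of a `∨∧`-pair `(i, j)` (so `i < j`, `i ∈ I_∨(λ,δ) \ I_∧(λ)`,
`j ∈ I_∧(λ) \ I_∨(λ,δ)`, `I_∧(μ) = (I_∧(λ) \ {j}) ∪ {i}` and
`I_∨(μ,δ) = (I_∨(λ,δ) \ {i}) ∪ {j}`), then `|μ•| = |λ•| + i − j` and
`|μ°| = |λ°| + i − j`. -/
theorem size_of_swap_vee_wedge_pair
    (δ : ℤ) (lb lw mb mw : ℕ → ℕ)
    (hlb : Antitone lb) (hlw : Antitone lw) (hmb : Antitone mb) (hmw : Antitone mw)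
    (hlb0 : ∃ N, ∀ k, N ≤ k → lb k = 0) (hlw0 : ∃ N, ∀ k, N ≤ k → lw k = 0)
    (hmb0 : ∃ N, ∀ k, N ≤ k → mb k = 0) (hmw0 : ∃ N, ∀ k, N ≤ k → mw k = 0)
    (i j : ℤ) (hij : i < j)
    (hi : i ∈ veeSet δ lw \ wedgeSet lb)
    (hj : j ∈ wedgeSet lb \ veeSet δ lw)
    (hwedge : wedgeSet mb = (wedgeSet lb \ {j}) ∪ {i})
    (hvee : veeSet δ mw = (veeSet δ lw \ {i}) ∪ {j}) :
    psize mb = psize lb + i - j ∧ psize mw = psize lw + i - j :=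
  size_of_swap_vee_wedge_pair_general δ lb lw mb mw hlb hlw hmb hmw hlb0 hlw0 hmb0 hmw0 i j hi hj
    hwedge hvee
end

section
/- Let m, n ≥ 0 be integers and let λ = (λ•, λ°) be an almost (m|n)-cross bipartition, i.e. λ•ₖ = 0 and λ°ₖ = 0 for all k > m+1, and λ•_{k+1} + λ°_{m−k+1} = n+1 for every integer 0 ≤ k ≤ m. Set δ = m − n. Then for every i ∈ I_∨(λ, δ) \ I_∧(λ) and every j ∈ I_∧(λ) \ I_∨(λ, δ) one has j < i; consequently there are no pairs (i, j) with i < j, i ∈ I_∨(λ, δ) \ I_∧(λ) and j ∈ I_∧(λ) \ I_∨(λ, δ) (the cap diagram of λ at parameter m − n has no caps). -/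
/-! For `k ≤ m` the cross condition `λ•_{m-k+1} + λ°_{k+1} = n + 1` makes the `k`-th point of
`I_∨(λ, m - n)` coincide with the `(m - k)`-th point of `I_∧(λ)`. So a point of `I_∨ \ I_∧` comes
from an index `k > m`, where `λ°` vanishes, and is at least `n + 2`; a point of `I_∧ \ I_∨` comes
from an index `l > m`, where `λ•` vanishes, and is at most `-(m + 1)`. -/

section AlmostCross

variable {m n : ℕ} {lb lw : ℕ → ℕ}

theorem vee_point_eq_wedge_point (hcross : ∀ k, k ≤ m → lb k + lw (m - k) = n + 1)
    {k : ℕ} (hk : k ≤ m) :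
    ((k : ℤ) + 1) - ((m : ℤ) - n) - lw k = (lb (m - k) : ℤ) - (m - k : ℕ) := by
  have h := hcross (m - k) (Nat.sub_le m k)
  rw [Nat.sub_sub_self hk] at h
  omega

theorem add_two_le_of_mem_veeSet_diff_wedgeSet (hw0 : ∀ k, m + 1 ≤ k → lw k = 0)
    (hcross : ∀ k, k ≤ m → lb k + lw (m - k) = n + 1)
    {i : ℤ} (hi : i ∈ veeSet ((m : ℤ) - n) lw \ wedgeSet lb) : (n : ℤ) + 2 ≤ i := by
  obtain ⟨⟨k, rfl⟩, hiw⟩ := hi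
  rcases le_or_gt k m with hkm | hkm
  · exact absurd ⟨m - k, vee_point_eq_wedge_point hcross hkm⟩ hiw
  · have := hw0 k hkm
    omega

theorem le_neg_add_one_of_mem_wedgeSet_diff_veeSet (hb0 : ∀ k, m + 1 ≤ k → lb k = 0)
    (hcross : ∀ k, k ≤ m → lb k + lw (m - k) = n + 1)
    {j : ℤ} (hj : j ∈ wedgeSet lb \ veeSet ((m : ℤ) - n) lw) : j ≤ -((m : ℤ) + 1) := by
  obtain ⟨⟨l, rfl⟩, hjv⟩ := hj
  rcases le_or_gt l m with hlm | hlm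
  · refine absurd ⟨m - l, ?_⟩ hjv
    rw [vee_point_eq_wedge_point hcross (Nat.sub_le m l), Nat.sub_sub_self hlm]
  · have := hb0 l hlm
    omega

end AlmostCross

theorem almost_cross_no_caps_general
    (m n : ℕ) (lb lw : ℕ → ℕ)
    (hb0 : ∀ k, m + 1 ≤ k → lb k = 0) (hw0 : ∀ k, m + 1 ≤ k → lw k = 0)
    (hcross : ∀ k, k ≤ m → lb k + lw (m - k) = n + 1) :
    (∀ i ∈ veeSet ((m : ℤ) - n) lw \ wedgeSet lb,
      ∀ j ∈ wedgeSet lb \ veeSet ((m : ℤ) - n) lw, j < i) ∧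
    ¬ ∃ i j : ℤ, i < j ∧ i ∈ veeSet ((m : ℤ) - n) lw \ wedgeSet lb ∧
      j ∈ wedgeSet lb \ veeSet ((m : ℤ) - n) lw := by
  have separated : ∀ i ∈ veeSet ((m : ℤ) - n) lw \ wedgeSet lb,
      ∀ j ∈ wedgeSet lb \ veeSet ((m : ℤ) - n) lw, j < i := fun i hi j hj => by
    have := add_two_le_of_mem_veeSet_diff_wedgeSet hw0 hcross hi
    have := le_neg_add_one_of_mem_wedgeSet_diff_veeSet hb0 hcross hj
    omega
  exact ⟨separated, fun ⟨i, j, hij, hi, hj⟩ => (separated i hi j hj).not_gt hij⟩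

/-- if `λ = (λ•, λ°)` is an almost `(m|n)`-cross bipartition (all parts
beyond the `(m+1)`-st vanish and `λ•_{k+1} + λ°_{m−k+1} = n+1` for `0 ≤ k ≤ m`), then at
the parameter `δ = m − n` every element `j` of `I_∧(λ) \ I_∨(λ,δ)` is smaller than every
element `i` of `I_∨(λ,δ) \ I_∧(λ)`; consequently there are no `∨∧`-pairs `(i, j)` with
`i < j`, i.e. the cap diagram of `λ` has no caps. -/
theorem almost_cross_no_caps
    (m n : ℕ) (lb lw : ℕ → ℕ)
    (hlb : Antitone lb) (hlw : Antitone lw)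
    (hb0 : ∀ k, m + 1 ≤ k → lb k = 0) (hw0 : ∀ k, m + 1 ≤ k → lw k = 0)
    (hcross : ∀ k, k ≤ m → lb k + lw (m - k) = n + 1) :
    (∀ i ∈ veeSet ((m : ℤ) - n) lw \ wedgeSet lb,
      ∀ j ∈ wedgeSet lb \ veeSet ((m : ℤ) - n) lw, j < i) ∧
    ¬ ∃ i j : ℤ, i < j ∧ i ∈ veeSet ((m : ℤ) - n) lw \ wedgeSet lb ∧
      j ∈ wedgeSet lb \ veeSet ((m : ℤ) - n) lw :=
  almost_cross_no_caps_general m n lb lw hb0 hw0 hcross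
end

section
/- Let m ≥ 1 and n ≥ 0 be integers. For k ∈ ℤ define d_k ∈ ℚ by d_k = Σ_{i=0}^{k} C(m+k−i−1, m−1)·C(n, i) if k ≥ 0 and d_k = 0 if k < 0. Then for every k ∈ ℤ: d_k + (−1)^{m−1}·d_{n−m−k} = (1/(m−1)!) · Σ_{i=0}^{n} ( ∏_{j=1}^{m−1} (k − i + j) ) · C(n, i), an identity in ℚ. -/
/-
The rising product `(x+1)⋯(x+M)` equals `M! C(x+M, M)` for `x ≥ 0`, equals
`(-1)^M M! C(-x-1, M)` for `x ≤ -M-1`, and vanishes in between. With `M = m - 1` and `x = k - i`,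
the right-hand side therefore splits into `Σ_{i ≤ k} C(k-i+M, M) C(n,i) = d_k` and
`(-1)^M Σ_{i > k+M} C(i-k-1, M) C(n,i)`, which the reflection `i ↦ n - i` (with
`C(n,i) = C(n,n-i)`) turns into `(-1)^M d_{n-m-k}`.
-/

open scoped BigOperators

/-- The specialization `𝖽_k = Σ_{i=0}^{k} C(m+k−i−1, m−1)·C(n, i)` of the complete
supersymmetric polynomial `𝐡_k` at `x_i = y_j = 1`, extended by `0` for `k < 0`. -/
def dValue (m n : ℕ) (k : ℤ) : ℚ :=
  if k < 0 then 0
  else ∑ i ∈ Finset.range (k.toNat + 1),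
    ((m + k.toNat - i - 1).choose (m - 1) : ℚ) * (n.choose i : ℚ)

open Finset

/-- The complete homogeneous polynomial `h_x` evaluated at `M + 1` ones. -/
def extChoose (M : ℕ) (x : ℤ) : ℚ :=
  if x < 0 then 0 else ((x.toNat + M).choose M : ℚ)

lemma extChoose_natCast (M t : ℕ) : extChoose M t = ((t + M).choose M : ℚ) := by
  simp [extChoose]

lemma extChoose_natCast_sub (M t : ℕ) : extChoose M ((t : ℤ) - M) = (t.choose M : ℚ) := by
  rcases lt_or_ge t M with h | h
  · simp [extChoose, Nat.choose_eq_zero_of_lt h, h]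
  · rw [show (t : ℤ) - M = ((t - M : ℕ) : ℤ) by omega, extChoose_natCast, Nat.sub_add_cancel h]

lemma extChoose_of_neg (M : ℕ) {x : ℤ} (hx : x < 0) : extChoose M x = 0 := if_pos hx

theorem prod_range_add_succ (M : ℕ) (x : ℤ) :
    ∏ j ∈ range M, ((x : ℚ) + ((j : ℚ) + 1)) =
      M.factorial * (extChoose M x + (-1) ^ M * extChoose M (-x - M - 1)) := by
  rcases le_or_gt 0 x with hx | hx
  · lift x to ℕ using hx
    rw [extChoose_natCast, extChoose_of_neg M (by omega), mul_zero, add_zero,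
      ← Nat.cast_mul, ← Nat.ascFactorial_eq_factorial_mul_choose, Nat.ascFactorial_eq_prod_range]
    push_cast
    exact prod_congr rfl fun j _ => by ring
  · obtain ⟨t, rfl⟩ : ∃ t : ℕ, x = -(t + 1) := ⟨(-x - 1).toNat, by omega⟩
    rw [extChoose_of_neg M hx, show -(-((t : ℤ) + 1)) - M - 1 = t - M by ring,
      extChoose_natCast_sub, zero_add, mul_left_comm, ← Nat.cast_mul,
      ← Nat.descFactorial_eq_factorial_mul_choose,
      ← descPochhammer_eval_eq_descFactorial, descPochhammer_eval_eq_prod_range]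
    calc ∏ j ∈ range M, (((-(t + 1) : ℤ) : ℚ) + ((j : ℚ) + 1))
        = ∏ j ∈ range M, -((t : ℚ) - j) := prod_congr rfl fun j _ => by push_cast; ring
      _ = _ := by rw [prod_neg, card_range]

lemma sum_range_mul_choose_of_le {R : Type*} [Semiring R] (f : ℕ → R) {n N : ℕ} (h : n ≤ N) :
    ∑ i ∈ range (N + 1), f i * n.choose i = ∑ i ∈ range (n + 1), f i * n.choose i := by
  refine (sum_subset (range_subset_range.mpr (by omega)) fun i _ hi => ?_).symm
  rw [Nat.choose_eq_zero_of_lt (by simpa using hi), Nat.cast_zero, mul_zero]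

theorem dValue_eq_sum_extChoose (M n : ℕ) (k : ℤ) :
    dValue (M + 1) n k = ∑ i ∈ range (n + 1), extChoose M (k - i) * n.choose i := by
  rcases lt_or_ge k 0 with hk | hk
  · simp only [dValue, if_pos hk]
    exact (sum_eq_zero fun i _ => by rw [extChoose_of_neg M (by omega), zero_mul]).symm
  lift k to ℕ using hk
  have hterm : ∀ i ∈ range (k + 1),
      ((M + 1 + k - i - 1).choose M : ℚ) = extChoose M ((k : ℤ) - i) := fun i hi => by
    have hi := mem_range.mp hi
    rw [show (k : ℤ) - i = ((k - i : ℕ) : ℤ) by omega, extChoose_natCast]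
    congr 2; omega
  have hvanish : ∀ i ∈ range (k + n + 1), i ∉ range (k + 1) →
      extChoose M ((k : ℤ) - i) * n.choose i = 0 := fun i _ hi => by
    rw [extChoose_of_neg M (by simp at hi; omega), zero_mul]
  simp only [dValue, Int.toNat_natCast, Nat.cast_nonneg, not_lt.mpr, if_false,
    Nat.add_sub_cancel]
  rw [sum_congr rfl fun i hi => by rw [hterm i hi], sum_subset (range_subset_range.mpr (by omega))
    hvanish, sum_range_mul_choose_of_le _ (by omega)]

theorem sum_extChoose_neg_mul_choose_eq_dValue (M n : ℕ) (k : ℤ) :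
    ∑ i ∈ range (n + 1), extChoose M (-(k - i) - M - 1) * n.choose i =
      dValue (M + 1) n ((n : ℤ) - (M + 1 : ℕ) - k) := by
  rw [dValue_eq_sum_extChoose, ← sum_range_reflect]
  refine sum_congr rfl fun i hi => ?_
  have hi : i ≤ n := Nat.lt_succ_iff.mp (mem_range.mp hi)
  rw [Nat.add_sub_cancel, Nat.choose_symm hi]
  congr 2
  push_cast [hi]
  ring

/-- Lemma 7.5 of the paper: for `m ≥ 1` and all `k ∈ ℤ`,
`𝖽_k + (−1)^{m−1}·𝖽_{n−m−k} = (1/(m−1)!)·Σ_{i=0}^{n} (∏_{j=1}^{m−1} (k−i+j))·C(n,i)`. -/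
theorem dValue_add_sign_mul_dValue
    (m n : ℕ) (hm : 1 ≤ m) (k : ℤ) :
    dValue m n k + (-1 : ℚ) ^ (m - 1) * dValue m n ((n : ℤ) - m - k) =
      (1 / ((m - 1).factorial : ℚ)) *
        ∑ i ∈ Finset.range (n + 1),
          (∏ j ∈ Finset.range (m - 1), ((k : ℚ) - (i : ℚ) + ((j : ℚ) + 1))) *
            (n.choose i : ℚ) := by
  obtain ⟨M, rfl⟩ : ∃ M, m = M + 1 := ⟨m - 1, by omega⟩
  have hprod (i : ℕ) := prod_range_add_succ M (k - i)
  push_cast at hprod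
  simp only [Nat.add_sub_cancel, hprod, mul_assoc, ← mul_sum, add_mul, sum_add_distrib]
  rw [sum_extChoose_neg_mul_choose_eq_dValue, ← dValue_eq_sum_extChoose]
  field_simp
end

section
/- Let m ≥ 1 and n ≥ 0 be integers. For k ∈ ℤ define d_k ∈ ℚ by d_k = Σ_{i=0}^{k} C(m+k−i−1, m−1)·C(n, i) if k ≥ 0 and d_k = 0 if k < 0. Let λ°₁ ≥ λ°₂ ≥ … ≥ λ°_{m+1} ≥ 0 be integers with λ°₁ ≤ n+1, and set λ•_i = n+1 − λ°_{m+2−i} for 1 ≤ i ≤ m+1. Let M be the (2m+2) × (2m+2) matrix over ℚ with entries (for 1 ≤ i, j ≤ 2m+2): M_{i,j} = d_{λ°_{m+2−j} + j − i} if 1 ≤ j ≤ m+1, and M_{i,j} = d_{λ•_{j−m−1} − j + i} if m+2 ≤ j ≤ 2m+2. Then det M = 0. (Equivalently, the composite supersymmetric Schur polynomial specialization 𝖽_λ vanishes for every almost (m|n)-cross bipartition λ.) -/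
/-!
The numbers `𝖽_k` are the coefficients of `(1 + t)^n / (1 - t)^m`, so `m`-fold differencing turns
them into the binomial coefficients `C(n, k)`. Use a row vector `v = (t - 1)^m s`, i.e.
`v = Δ_[-1]^[m] s`, with `s` supported on `0, …, m+1`. Summation by parts moves the differences
onto the columns: the `c`-th column of the left block pairs with `v` to `± Σ_a s_a C(n, X_c - a)`
with `X_c = λ°_{m+1-c} + c`, and because `C(n, k) = C(n, n - k)` and `λ•` is the complement of
`λ°` in the `(m+1) × (n+1)` rectangle, the `c`-th column of the right block gives the same sum.
So `v M = 0` is only `m + 1` linear conditions on the `m + 2` unknowns `s_a`; a nonzero solution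
`s` gives `v ≠ 0`, since `Δ_[-1]` is injective on finitely supported functions.
-/

open scoped BigOperators

open Finset Function fwdDiff

section FwdDiff

variable {M G : Type*} [AddCommGroup M] [AddCommGroup G]

theorem fwdDiff_iter_comp_sub (h : M) (f : M → G) (c : M) (m : ℕ) (y : M) :
    Δ_[h] ^[m] (fun r => f (c - r)) y = Δ_[-h] ^[m] f (c - y) := by
  induction m generalizing f with
  | zero => rfl
  | succ m ih =>
    have hstep : Δ_[h] (fun r => f (c - r)) = fun r => Δ_[-h] f (c - r) := by
      funext r
      simp only [fwdDiff, sub_add_eq_sub_sub, ← sub_eq_add_neg]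
    rw [iterate_succ_apply, hstep, ih, iterate_succ_apply]

theorem fwdDiff_iter_eq_neg_one_pow_smul (h : M) (f : M → G) (m : ℕ) (y : M) :
    Δ_[h] ^[m] f y = (-1 : ℤ) ^ m • Δ_[-h] ^[m] f (y + m • h) := by
  induction m generalizing f with
  | zero => simp
  | succ m ih =>
    have hstep : Δ_[h] f = (-1 : ℤ) • fun r => Δ_[-h] f (r + h) := by
      funext r
      simp [fwdDiff]
    rw [iterate_succ_apply, hstep, fwdDiff_iter_const_smul, Pi.smul_apply, ih,
      fwdDiff_iter_comp_add, iterate_succ_apply, pow_succ', mul_smul, succ_nsmul, add_assoc]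

end FwdDiff

section SummationByParts

variable {R : Type*} [Ring R] {f : ℤ → R} {N : ℕ}

theorem support_fwdDiff_neg_one_subset (hf : support f ⊆ Set.Ico 0 (N : ℤ)) :
    support (Δ_[-1] f) ⊆ Set.Ico 0 ((N + 1 : ℕ) : ℤ) := by
  intro k hk
  have hne : f (k + -1) ≠ 0 ∨ f k ≠ 0 := by
    by_contra! h
    exact hk (by simp [fwdDiff, h.1, h.2])
  rw [Set.mem_Ico]
  obtain h | h := hne <;> · have := hf h; rw [Set.mem_Ico] at this; omega

theorem support_fwdDiff_neg_one_iter_subset (hf : support f ⊆ Set.Ico 0 (N : ℤ)) (m : ℕ) :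
    support (Δ_[-1] ^[m] f) ⊆ Set.Ico 0 ((N + m : ℕ) : ℤ) := by
  induction m with
  | zero => simpa using hf
  | succ m ih =>
    rw [iterate_succ_apply', ← add_assoc]
    exact support_fwdDiff_neg_one_subset ih

theorem eq_zero_of_fwdDiff_neg_one_iter_eq_zero (hf : support f ⊆ Set.Ico 0 (N : ℤ)) {m : ℕ}
    (h : Δ_[-1] ^[m] f = 0) : f = 0 := by
  induction m generalizing f N with
  | zero => exact h
  | succ m ih =>
    have hΔ : Δ_[-1] f = 0 := ih (support_fwdDiff_neg_one_subset hf) h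
    have hper : Periodic f (-1) := fun k => sub_eq_zero.1 (congrFun hΔ k)
    funext k
    have hk : f k = f 0 := by simpa using hper.int_mul_eq (-k)
    rw [hk, ← hper 0, zero_add]
    exact notMem_support.1 fun h => by simpa using (hf h).1

theorem sum_range_fwdDiff_neg_one_mul (hf : support f ⊆ Set.Ico 0 (N : ℤ)) (g : ℤ → R) :
    ∑ a ∈ range (N + 1), Δ_[-1] f a * g a = ∑ a ∈ range N, f a * Δ_[1] g a := by
  have hlast : f N = 0 := notMem_support.1 fun h => by simpa using (hf h).2
  have hfirst : f (-1) = 0 := notMem_support.1 fun h => by simpa using (hf h).1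
  simp only [fwdDiff, sub_mul, mul_sub, sum_sub_distrib]
  rw [sum_range_succ', sum_range_succ]
  simp [hlast, hfirst]

theorem sum_range_fwdDiff_neg_one_iter_mul (hf : support f ⊆ Set.Ico 0 (N : ℤ)) (m : ℕ)
    (g : ℤ → R) :
    ∑ a ∈ range (N + m), Δ_[-1] ^[m] f a * g a = ∑ a ∈ range N, f a * Δ_[1] ^[m] g a := by
  induction m generalizing f N with
  | zero => rfl
  | succ m ih =>
    rw [iterate_succ_apply, iterate_succ_apply', ← add_assoc, Nat.add_right_comm,
      ih (support_fwdDiff_neg_one_subset hf), sum_range_fwdDiff_neg_one_mul hf]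

end SummationByParts

def intChoose (n : ℕ) (k : ℤ) : ℚ := if k < 0 then 0 else (n.choose k.toNat : ℚ)

theorem intChoose_symm (n : ℕ) (k : ℤ) : intChoose n (n - k) = intChoose n k := by
  unfold intChoose
  split_ifs with h₁ h₂ h₂
  · rfl
  · rw [Nat.choose_eq_zero_of_lt (by omega : n < k.toNat), Nat.cast_zero]
  · rw [Nat.choose_eq_zero_of_lt (by omega : n < ((n : ℤ) - k).toNat), Nat.cast_zero]
  · rw [show ((n : ℤ) - k).toNat = n - k.toNat by omega, Nat.choose_symm (by omega)]

theorem dValue_of_neg {m n : ℕ} {k : ℤ} (hk : k < 0) : dValue m n k = 0 := if_pos hk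

theorem dValue_succ_natCast (m n k : ℕ) :
    dValue (m + 1) n k = ∑ i ∈ range (k + 1), ((m + (k - i)).choose m : ℚ) * n.choose i := by
  rw [dValue, if_neg (by omega), Int.toNat_natCast]
  refine sum_congr rfl fun i hi => ?_
  rw [mem_range] at hi
  rw [show m + 1 + k - i - 1 = m + (k - i) by omega, Nat.add_sub_cancel]

theorem dValue_succ_zero (m n : ℕ) : dValue (m + 1) n 0 = 1 := by
  simpa using dValue_succ_natCast m n 0

theorem dValue_add_two_natCast_succ (m n k : ℕ) :
    dValue (m + 2) n (k + 1 : ℕ) = dValue (m + 2) n k + dValue (m + 1) n (k + 1 : ℕ) := by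
  have hpascal : ∀ i ∈ range (k + 1), ((m + 1 + (k + 1 - i)).choose (m + 1) : ℚ) =
      (m + (k + 1 - i)).choose m + (m + 1 + (k - i)).choose (m + 1) := by
    intro i hi
    rw [mem_range] at hi
    rw [show m + 1 + (k + 1 - i) = m + (k + 1 - i) + 1 by omega, Nat.choose_succ_succ',
      show m + (k + 1 - i) = m + 1 + (k - i) by omega]
    push_cast
    ring
  simp only [dValue_succ_natCast, sum_range_succ _ (k + 1), Nat.sub_self, add_zero,
    Nat.choose_self, Nat.cast_one, one_mul]
  rw [sum_congr rfl fun i hi => congrArg (· * (n.choose i : ℚ)) (hpascal i hi)]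
  simp only [add_mul, sum_add_distrib]
  ring

theorem dValue_one_natCast_succ (n k : ℕ) :
    dValue 1 n (k + 1 : ℕ) = dValue 1 n k + n.choose (k + 1) := by
  rw [dValue_succ_natCast 0, dValue_succ_natCast 0, sum_range_succ _ (k + 1)]
  simp

theorem dValue_add_two_eq_sub_one_add (m n : ℕ) (k : ℤ) :
    dValue (m + 2) n k = dValue (m + 2) n (k - 1) + dValue (m + 1) n k := by
  rcases lt_trichotomy k 0 with hk | rfl | hk
  · simp [dValue_of_neg hk, dValue_of_neg (by omega : k - 1 < 0)]
  · simp [dValue_of_neg (by norm_num : (-1 : ℤ) < 0), dValue_succ_zero]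
  · lift k to ℕ using hk.le
    obtain _ | k := k
    · omega
    · simpa using dValue_add_two_natCast_succ m n k

theorem dValue_one_eq_sub_one_add (n : ℕ) (k : ℤ) :
    dValue 1 n k = dValue 1 n (k - 1) + intChoose n k := by
  rcases lt_trichotomy k 0 with hk | rfl | hk
  · simp [dValue_of_neg hk, dValue_of_neg (by omega : k - 1 < 0), intChoose, hk]
  · simp [dValue_of_neg (by norm_num : (-1 : ℤ) < 0), dValue_succ_zero 0, intChoose]
  · lift k to ℕ using hk.le
    obtain _ | k := k
    · omega
    · rw [intChoose, if_neg (by omega), Int.toNat_natCast]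
      simpa using dValue_one_natCast_succ n k

theorem fwdDiff_neg_one_iter_dValue {m : ℕ} (hm : 1 ≤ m) (n : ℕ) :
    Δ_[-1] ^[m] (dValue m n) = (-1 : ℚ) ^ m • intChoose n := by
  induction m, hm using Nat.le_induction with
  | base =>
    funext k
    simp [fwdDiff, dValue_one_eq_sub_one_add n k, ← sub_eq_add_neg]
  | succ m hm ih =>
    obtain ⟨m, rfl⟩ := Nat.exists_eq_add_of_le' hm
    have hstep : Δ_[-1] (dValue (m + 2) n) = (-1 : ℚ) • dValue (m + 1) n := by
      funext k
      simp [fwdDiff, dValue_add_two_eq_sub_one_add m n k, ← sub_eq_add_neg]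
    rw [iterate_succ_apply, hstep, fwdDiff_iter_const_smul, ih, smul_smul, ← pow_succ']

theorem fwdDiff_iter_dValue {m : ℕ} (hm : 1 ≤ m) (n : ℕ) (k : ℤ) :
    Δ_[1] ^[m] (dValue m n) k = intChoose n (k + m) := by
  rw [fwdDiff_iter_eq_neg_one_pow_smul, fwdDiff_neg_one_iter_dValue hm, Pi.smul_apply,
    smul_eq_mul, zsmul_eq_mul, ← mul_assoc]
  push_cast
  rw [← mul_pow]
  simp

theorem exists_ne_zero_support_subset_forall_sum_mul_eq_zero {K : Type*} [Field K] (N : ℕ)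
    (φ : Fin N → ℤ → K) :
    ∃ s : ℤ → K, s ≠ 0 ∧ support s ⊆ Set.Ico 0 ((N + 1 : ℕ) : ℤ) ∧
      ∀ c, ∑ a ∈ range (N + 1), s a * φ c a = 0 := by
  let A : Matrix (Fin N) (Fin (N + 1)) K := Matrix.of fun c a => φ c a
  obtain ⟨t, ht, ht0⟩ := Submodule.exists_mem_ne_zero_of_ne_bot
    (LinearMap.ker_ne_bot_of_finrank_lt (f := A.mulVecLin) (by simp))
  let ι : Fin (N + 1) → ℤ := fun a => (a : ℕ)
  have hι : Injective ι := fun a b h => Fin.ext (by simpa [ι] using h)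
  have hext (a : Fin (N + 1)) : extend ι t 0 (a : ℕ) = t a := hι.extend_apply t 0 a
  refine ⟨extend ι t 0, fun h => ht0 (funext fun a => ?_), ?_, fun c => ?_⟩
  · simpa [hext] using congrFun h (a : ℕ)
  · intro k hk
    by_cases hkι : ∃ a, ι a = k
    · obtain ⟨a, rfl⟩ := hkι
      simp only [ι, Set.mem_Ico]
      omega
    · exact absurd (extend_apply' t (0 : ℤ → K) k hkι) hk
  · have hc := congrFun (LinearMap.mem_ker.1 ht) c
    rw [← Fin.sum_univ_eq_sum_range (fun a => extend ι t 0 a * φ c a)]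
    simpa [hext, A, Matrix.mulVec, dotProduct, mul_comm] using hc

theorem sum_fin_fwdDiff_neg_one_iter_mul {R : Type*} [Ring R] {m : ℕ} {s : ℤ → R}
    (hs : support s ⊆ Set.Ico 0 ((m + 1 + 1 : ℕ) : ℤ)) (g : ℤ → R) :
    ∑ a : Fin (2 * m + 2), Δ_[-1] ^[m] s a * g a =
      ∑ a ∈ range (m + 1 + 1), s a * Δ_[1] ^[m] g a := by
  rw [Fin.sum_univ_eq_sum_range (fun a => Δ_[-1] ^[m] s a * g a),
    show 2 * m + 2 = m + 1 + 1 + m by ring]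
  exact sum_range_fwdDiff_neg_one_iter_mul hs m g

theorem fwdDiff_neg_one_iter_comp_fin_ne_zero {R : Type*} [Ring R] {f : ℤ → R} {N K : ℕ}
    (hf : support f ⊆ Set.Ico 0 (N : ℤ)) (hf0 : f ≠ 0) (m : ℕ) (hK : N + m ≤ K) :
    (fun a : Fin K => Δ_[-1] ^[m] f a) ≠ 0 := by
  refine fun hv => hf0 (eq_zero_of_fwdDiff_neg_one_iter_eq_zero hf (m := m) (funext fun k => ?_))
  by_cases hk : k ∈ Set.Ico 0 ((N + m : ℕ) : ℤ)
  · lift k to ℕ using hk.1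
    exact congrFun hv ⟨k, by have := hk.2; omega⟩
  · exact notMem_support.1 fun h => hk (support_fwdDiff_neg_one_iter_subset hf m h)

theorem sum_fwdDiff_neg_one_iter_mul_dValue_sub {m : ℕ} (hm : 1 ≤ m) (n : ℕ) {s : ℤ → ℚ}
    (hs : support s ⊆ Set.Ico 0 ((m + 1 + 1 : ℕ) : ℤ)) (X : ℤ) :
    ∑ a : Fin (2 * m + 2), Δ_[-1] ^[m] s a * dValue m n (X - a) =
      (-1) ^ m * ∑ a ∈ range (m + 1 + 1), s a * intChoose n (X - a) := by
  rw [sum_fin_fwdDiff_neg_one_iter_mul hs fun r => dValue m n (X - r), mul_sum]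
  simp only [fwdDiff_iter_comp_sub, fwdDiff_neg_one_iter_dValue hm, Pi.smul_apply, smul_eq_mul,
    mul_left_comm _ ((-1 : ℚ) ^ m)]

theorem sum_fwdDiff_neg_one_iter_mul_dValue_add {m : ℕ} (hm : 1 ≤ m) (n : ℕ) {s : ℤ → ℚ}
    (hs : support s ⊆ Set.Ico 0 ((m + 1 + 1 : ℕ) : ℤ)) (Y : ℤ) :
    ∑ a : Fin (2 * m + 2), Δ_[-1] ^[m] s a * dValue m n (Y + a) =
      ∑ a ∈ range (m + 1 + 1), s a * intChoose n (n - m - Y - a) := by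
  rw [sum_fin_fwdDiff_neg_one_iter_mul hs fun r => dValue m n (Y + r)]
  refine sum_congr rfl fun a _ => ?_
  simp only [add_comm Y, fwdDiff_iter_comp_add, fwdDiff_iter_dValue hm]
  rw [← intChoose_symm]
  ring_nf

/-- `lw` encodes `λ°`, and the `Fin` indices `a = i − 1`, `b = j − 1` are zero-based. -/
theorem det_almost_cross_eq_zero
    (m n : ℕ) (hm : 1 ≤ m) (lw : ℕ → ℕ)
    (hdec : ∀ i, 1 ≤ i → i ≤ m → lw (i + 1) ≤ lw i)
    (hle : lw 1 ≤ n + 1) :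
    Matrix.det (Matrix.of fun a b : Fin (2 * m + 2) =>
      if (b : ℕ) ≤ m then
        dValue m n ((lw (m + 1 - (b : ℕ)) : ℤ) + (b : ℕ) - (a : ℕ))
      else
        dValue m n (((n + 1 - lw (2 * m + 2 - (b : ℕ)) : ℕ) : ℤ) + (a : ℕ) - (b : ℕ)))
      = 0 := by
  have hanti : AntitoneOn lw (Set.Icc 1 (m + 1)) :=
    antitoneOn_of_succ_le Set.ordConnected_Icc fun i _ hi hi' => by
      simp only [Order.succ_eq_add_one, Set.mem_Icc] at hi hi'
      exact hdec i hi.1 (by omega)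
  have hlw (j : ℕ) (h₁ : 1 ≤ j) (h₂ : j ≤ m + 1) : lw j ≤ n + 1 :=
    (hanti ⟨le_rfl, by omega⟩ ⟨h₁, h₂⟩ h₁).trans hle
  obtain ⟨s, hs0, hs, hsc⟩ := exists_ne_zero_support_subset_forall_sum_mul_eq_zero (m + 1)
    fun c a => intChoose n (lw (m + 1 - c) + c - a)
  rw [← Matrix.exists_vecMul_eq_zero_iff]
  refine ⟨_, fwdDiff_neg_one_iter_comp_fin_ne_zero hs hs0 m (by omega), funext fun b => ?_⟩
  simp only [Matrix.vecMul, dotProduct, Matrix.of_apply, Pi.zero_apply]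
  by_cases hb : (b : ℕ) ≤ m
  · simp only [hb, if_true]
    rw [sum_fwdDiff_neg_one_iter_mul_dValue_sub hm n hs]
    exact mul_eq_zero_of_right _ (hsc ⟨b, by omega⟩)
  · simp only [hb, if_false, add_sub_right_comm _ _ ((b : ℕ) : ℤ)]
    rw [sum_fwdDiff_neg_one_iter_mul_dValue_add hm n hs]
    convert hsc ⟨b - (m + 1), by omega⟩ using 4 with a
    dsimp only
    rw [show 2 * m + 2 - (b : ℕ) = m + 1 - (b - (m + 1)) by omega]
    have := hlw (m + 1 - (b - (m + 1))) (by omega) (by omega)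
    omega
end
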